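/- For a positive parameter θ > 0 and exponent 0 < p ≤ 2, the Gaussian-type kernel k(x,y) = exp(−θ|x−y|^p) on ℝ is positive semidefinite: for any points x_1,…,x_n ∈ ℝ, the matrix [exp(−θ|x_i−x_j|^p)] is positive semidefinite. -/

import Mathlib

/-!
A function `ψ` with `ψ 0 = 0`, `ψ (-t) = ψ t` that is conditionally negative definite
(`∑ cᵢ cⱼ ψ (xᵢ - xⱼ) ≤ 0` whenever `∑ cᵢ = 0`) has a positive semidefinite kernel
`exp (-ψ (x - y))` (Schoenberg): adjoining the point `0` with weight `-∑ cᵢ` shows that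
`ψ xᵢ + ψ xⱼ - ψ (xᵢ - xⱼ)` is positive semidefinite, its entrywise exponential is too by the
Schur product theorem and the exponential series, and conjugating by the diagonal matrix
`exp (-ψ xᵢ)` gives `exp (-ψ (xᵢ - xⱼ))`.

It remains to see that `|t| ^ p` is conditionally negative definite for `0 < p ≤ 2`. For `p = 2`
this is `∑ cᵢ cⱼ (xᵢ - xⱼ) ^ 2 = -2 (∑ cᵢ xᵢ) ^ 2`. For `0 < p < 2` it is a positive multiple of
`∫₀^∞ (1 - cos (t s)) s ^ (-(p + 1)) ds`, a mixture of the conditionally negative definite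
functions `1 - cos (t s)`.
-/

open Matrix Finset Real MeasureTheory Set
open scoped ComplexOrder

namespace Matrix

variable {ι : Type*} [Fintype ι]

lemma star_dotProduct_mulVec_eq_sum_sum (M : Matrix ι ι ℝ) (c : ι → ℝ) :
    star c ⬝ᵥ (M *ᵥ c) = ∑ i, ∑ j, c i * c j * M i j := by
  simp only [dotProduct, mulVec, star_trivial, mul_sum]
  exact sum_congr rfl fun i _ => sum_congr rfl fun j _ => by ring

lemma posSemidef_of_sum_sum_nonneg {M : Matrix ι ι ℝ} (hM : ∀ i j, M i j = M j i)
    (h : ∀ c : ι → ℝ, 0 ≤ ∑ i, ∑ j, c i * c j * M i j) : M.PosSemidef :=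
  .of_dotProduct_mulVec_nonneg (IsHermitian.ext fun i j => hM j i) fun c =>
    (star_dotProduct_mulVec_eq_sum_sum M c).symm ▸ h c

lemma PosSemidef.map_pow {𝕜 : Type*} [RCLike 𝕜] {A : Matrix ι ι 𝕜} (hA : A.PosSemidef) :
    ∀ k : ℕ, (A.map (· ^ k)).PosSemidef
  | 0 => by
    convert posSemidef_vecMulVec_self_star (1 : ι → 𝕜) using 1
    ext i j
    simp [vecMulVec]
  | k + 1 => by
    convert (hA.map_pow k).hadamard hA using 1
    ext i j
    simp [pow_succ]

lemma PosSemidef.map_exp {A : Matrix ι ι ℝ} (hA : A.PosSemidef) : (A.map exp).PosSemidef := by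
  refine .of_dotProduct_mulVec_nonneg (hA.isHermitian.map _ fun _ => rfl) fun c => ?_
  have hsum : HasSum (fun k : ℕ => (k.factorial : ℝ)⁻¹ * (star c ⬝ᵥ (A.map (· ^ k) *ᵥ c)))
      (star c ⬝ᵥ (A.map exp *ᵥ c)) := by
    simp only [star_dotProduct_mulVec_eq_sum_sum, mul_sum, map_apply]
    refine hasSum_sum fun i _ => hasSum_sum fun j _ => ?_
    rw [exp_eq_exp_ℝ]
    exact ((NormedSpace.expSeries_div_hasSum_exp (A i j)).mul_left (c i * c j)).congr_fun
      fun k => by ring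
  exact hsum.nonneg fun k => mul_nonneg (by positivity) ((hA.map_pow k).dotProduct_mulVec_nonneg c)

end Matrix

def IsCondNegDef {G : Type*} [AddGroup G] (ψ : G → ℝ) : Prop :=
  ∀ (n : ℕ) (x : Fin n → G) (c : Fin n → ℝ), ∑ i, c i = 0 →
    ∑ i, ∑ j, c i * c j * ψ (x i - x j) ≤ 0

namespace IsCondNegDef

variable {G : Type*} [AddGroup G] {ψ : G → ℝ}

lemma const_mul (hψ : IsCondNegDef ψ) {a : ℝ} (ha : 0 ≤ a) : IsCondNegDef fun t => a * ψ t :=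
  fun n x c hc => by
    simpa only [mul_sum, mul_left_comm a] using mul_nonpos_of_nonneg_of_nonpos ha (hψ n x c hc)

lemma integral {α : Type*} [MeasurableSpace α] {μ : Measure α} {ψ : α → G → ℝ}
    (hψ : ∀ᵐ s ∂μ, IsCondNegDef (ψ s)) (hint : ∀ t, Integrable (fun s => ψ s t) μ) :
    IsCondNegDef fun t => ∫ s, ψ s t ∂μ := fun n x c hc => by
  simp only [← integral_const_mul]
  simp only [← integral_finsetSum _ fun j _ => (hint _).const_mul _]
  rw [← integral_finsetSum _ fun i _ => integrable_finsetSum _ fun j _ => (hint _).const_mul _]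
  exact integral_nonpos_of_ae (hψ.mono fun s hs => hs n x c hc)

lemma posSemidef_add_sub (hψ : IsCondNegDef ψ) (hψ0 : ψ 0 = 0) (hψneg : ∀ t, ψ (-t) = ψ t)
    {n : ℕ} (x : Fin n → G) :
    (of fun i j => ψ (x i) + ψ (x j) - ψ (x i - x j)).PosSemidef := by
  refine posSemidef_of_sum_sum_nonneg (fun i j => by
    simp only [of_apply]; rw [← neg_sub (x j), hψneg]; ring) fun c => ?_
  have hext := hψ (n + 1) (Fin.cons 0 x) (Fin.cons (-∑ i, c i) c) (by simp [Fin.sum_univ_succ])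
  simp only [Fin.sum_univ_succ, Fin.cons_zero, Fin.cons_succ, zero_sub, sub_zero, hψ0, hψneg]
    at hext
  simp only [of_apply, mul_sub, mul_add, sum_add_distrib, sum_sub_distrib, ← sum_mul, ← mul_sum,
    mul_zero, zero_add, neg_mul, mul_neg, sum_neg_distrib, mul_comm (∑ i, c i)] at hext ⊢
  have hswap : ∑ i, ∑ j, c i * c j * ψ (x j) = ∑ i, c i * (∑ j, c j) * ψ (x i) := by
    rw [sum_comm]
    exact sum_congr rfl fun i _ => by
      rw [mul_sum, sum_mul]; exact sum_congr rfl fun j _ => by ring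
  linarith

theorem posSemidef_exp_neg (hψ : IsCondNegDef ψ) (hψ0 : ψ 0 = 0) (hψneg : ∀ t, ψ (-t) = ψ t)
    {n : ℕ} (x : Fin n → G) :
    (of fun i j => exp (-ψ (x i - x j))).PosSemidef := by
  convert ((hψ.posSemidef_add_sub hψ0 hψneg x).map_exp).conjTranspose_mul_mul_same
    (diagonal fun i => exp (-ψ (x i))) using 1
  ext i j
  simp [← exp_add]
  ring

end IsCondNegDef

lemma isCondNegDef_sq : IsCondNegDef fun t : ℝ => t ^ 2 := fun n x c hc => by
  have hexpand : ∀ i j, c i * c j * (x i - x j) ^ 2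
      = c i * x i ^ 2 * c j + c i * (c j * x j ^ 2) - 2 * (c i * x i) * (c j * x j) :=
    fun i j => by ring
  simp only [hexpand, sum_add_distrib, sum_sub_distrib, ← mul_sum, ← sum_mul, hc]
  nlinarith [sq_nonneg (∑ i, c i * x i)]

lemma isCondNegDef_one_sub_cos_mul (s : ℝ) : IsCondNegDef fun t : ℝ => 1 - cos (t * s) :=
  fun n x c hc => by
  have hexpand : ∀ i j, c i * c j * (1 - cos ((x i - x j) * s)) = c i * c j
      - c i * cos (x i * s) * (c j * cos (x j * s)) - c i * sin (x i * s) * (c j * sin (x j * s)) :=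
    fun i j => by rw [sub_mul, cos_sub]; ring
  simp only [hexpand, sum_sub_distrib, ← mul_sum, ← sum_mul, hc]
  nlinarith [sq_nonneg (∑ i, c i * cos (x i * s)), sq_nonneg (∑ i, c i * sin (x i * s))]

section LevyIntegral

variable {p : ℝ}

lemma integrableOn_rpow_mul_one_sub_cos_mul (hp : 0 < p) (hp2 : p < 2) (t : ℝ) :
    IntegrableOn (fun s => s ^ (-(p + 1)) * (1 - cos (t * s))) (Ioi 0) := by
  have hcont : ContinuousOn (fun s => s ^ (-(p + 1)) * (1 - cos (t * s))) (Ioi 0) :=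
    fun s hs => ((continuousAt_rpow_const s _ (Or.inl hs.ne')).mul (by fun_prop)).continuousWithinAt
  rw [← Ioc_union_Ioi_eq_Ioi zero_le_one]
  refine IntegrableOn.union ?_ ?_
  · have hdom : IntegrableOn (fun s : ℝ => t ^ 2 / 2 * s ^ (1 - p)) (Ioc 0 1) := by
      rw [integrableOn_Ioc_iff_integrableOn_Ioo]
      exact ((intervalIntegral.integrableOn_Ioo_rpow_iff zero_lt_one).mpr (by linarith)).const_mul _
    refine hdom.mono' ((hcont.mono Ioc_subset_Ioi_self).aestronglyMeasurable measurableSet_Ioc)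
      ((ae_restrict_iff' measurableSet_Ioc).mpr (.of_forall fun s hs => ?_))
    have hw : 0 < s ^ (-(p + 1)) := rpow_pos_of_pos hs.1 _
    rw [norm_of_nonneg (mul_nonneg hw.le (by linarith [cos_le_one (t * s)]))]
    calc s ^ (-(p + 1)) * (1 - cos (t * s)) ≤ s ^ (-(p + 1)) * ((t * s) ^ 2 / 2) :=
          mul_le_mul_of_nonneg_left (by linarith [one_sub_sq_div_two_le_cos (x := t * s)]) hw.le
      _ = t ^ 2 / 2 * (s ^ (-(p + 1)) * s ^ (2 : ℝ)) := by rw [rpow_two]; ring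
      _ = t ^ 2 / 2 * s ^ (1 - p) := by rw [← rpow_add hs.1]; ring_nf
  · have hdom : IntegrableOn (fun s : ℝ => 2 * s ^ (-(p + 1))) (Ioi 1) :=
      ((integrableOn_Ioi_rpow_iff zero_lt_one).mpr (by linarith)).const_mul _
    refine hdom.mono' ((hcont.mono (Ioi_subset_Ioi zero_le_one)).aestronglyMeasurable
      measurableSet_Ioi) ((ae_restrict_iff' measurableSet_Ioi).mpr (.of_forall fun s hs => ?_))
    have hw : 0 < s ^ (-(p + 1)) := rpow_pos_of_pos (zero_lt_one.trans hs) _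
    rw [norm_of_nonneg (mul_nonneg hw.le (by linarith [cos_le_one (t * s)]))]
    nlinarith [neg_one_le_cos (t * s)]

lemma integral_rpow_mul_one_sub_cos_mul (hp : 0 < p) (t : ℝ) :
    ∫ s in Ioi 0, s ^ (-(p + 1)) * (1 - cos (t * s))
      = |t| ^ p * ∫ s in Ioi 0, s ^ (-(p + 1)) * (1 - cos s) := by
  rcases eq_or_ne t 0 with rfl | ht
  · simp [zero_rpow hp.ne']
  have ht' : 0 < |t| := abs_pos.mpr ht
  have hsubst := integral_comp_mul_left_Ioi (fun s => s ^ (-(p + 1)) * (1 - cos s)) 0 ht'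
  rw [mul_zero, smul_eq_mul] at hsubst
  have hcos (s : ℝ) : cos (|t| * s) = cos (t * s) := by
    rcases abs_choice t with h | h <;> simp [h]
  have hpt : ∀ s ∈ Ioi (0 : ℝ), s ^ (-(p + 1)) * (1 - cos (t * s))
      = |t| ^ (p + 1) * ((|t| * s) ^ (-(p + 1)) * (1 - cos (|t| * s))) := fun s hs => by
    rw [mul_rpow ht'.le (le_of_lt hs), hcos, rpow_neg ht'.le]
    field_simp
  rw [setIntegral_congr_fun measurableSet_Ioi hpt, integral_const_mul, hsubst, ← mul_assoc,
    ← rpow_neg_one, ← rpow_add ht']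
  ring_nf

lemma integral_rpow_mul_one_sub_cos_pos (hp : 0 < p) (hp2 : p < 2) :
    0 < ∫ s in Ioi 0, s ^ (-(p + 1)) * (1 - cos s) := by
  have hnonneg : 0 ≤ᵐ[volume.restrict (Ioi 0)] fun s => s ^ (-(p + 1)) * (1 - cos s) :=
    (ae_restrict_mem measurableSet_Ioi).mono fun s hs =>
      mul_nonneg (rpow_nonneg (le_of_lt hs) _) (by linarith [cos_le_one s])
  rw [setIntegral_pos_iff_support_of_nonneg_ae hnonneg
    (by simpa using integrableOn_rpow_mul_one_sub_cos_mul hp hp2 1)]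
  refine lt_of_lt_of_le ?_ (measure_mono (s := Ioo (π / 2) π) fun s hs => ⟨?_, ?_⟩)
  · simp [pi_pos]
  · have hcos := cos_nonpos_of_pi_div_two_le_of_le hs.1.le (by linarith [hs.2, pi_pos])
    exact mul_ne_zero (rpow_pos_of_pos (by linarith [hs.1, pi_pos]) _).ne' (by linarith)
  · exact mem_Ioi.mpr (by linarith [hs.1, pi_pos])

end LevyIntegral

lemma isCondNegDef_abs_rpow {p : ℝ} (hp : 0 < p) (hp2 : p ≤ 2) :
    IsCondNegDef fun t : ℝ => |t| ^ p := by
  rcases hp2.eq_or_lt with rfl | hp2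
  · simpa only [rpow_two, sq_abs] using isCondNegDef_sq
  have hC := integral_rpow_mul_one_sub_cos_pos hp hp2
  have hlevy : IsCondNegDef fun t : ℝ => ∫ s in Ioi 0, s ^ (-(p + 1)) * (1 - cos (t * s)) :=
    .integral ((ae_restrict_mem measurableSet_Ioi).mono fun s hs =>
        (isCondNegDef_one_sub_cos_mul s).const_mul (rpow_nonneg (le_of_lt hs) _))
      (integrableOn_rpow_mul_one_sub_cos_mul hp hp2)
  convert hlevy.const_mul (inv_nonneg.mpr hC.le) using 1
  funext t
  rw [integral_rpow_mul_one_sub_cos_mul hp]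
  field_simp

/-- Schoenberg: for `θ > 0` and `0 < p ≤ 2`, the Gram matrix of the kernel
`(x,y) ↦ exp(−θ·|x−y|^p)` at any finite family of points in `ℝ` is PSD. -/
theorem exp_abs_rpow_kernel_posSemidef {n : ℕ} (θ p : ℝ)
    (hθ : 0 < θ) (hp : 0 < p) (hp2 : p ≤ 2) (x : Fin n → ℝ) :
    (Matrix.of fun i j => Real.exp (-θ * |x i - x j| ^ p)).PosSemidef := by
  have hψ := (isCondNegDef_abs_rpow hp hp2).const_mul hθ.le
  simpa only [neg_mul] using hψ.posSemidef_exp_neg (by simp [zero_rpow hp.ne']) (by simp) x
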